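/- For constants c > 0, m ≥ 0, h > 0, 0 ≤ r < T, and s > 0, the integral (2/(T² − r²)) ∫_{√(r²+h²)}^{√(T²+h²)} u · exp(−s c u^{−2(m+3)}) du equals (c s)^{1/(m+3)} / ((m+3)(T² − r²)) · [Γ_u(−1/(m+3), c s (h²+T²)^{−(m+3)}) − Γ_u(−1/(m+3), c s (h²+r²)^{−(m+3)})]. -/

import Mathlib

/-!
The substitution `t = c s u^(-2(m+3))` maps `[√(r²+h²), √(T²+h²)]` onto
`[c s (h²+T²)^(-(m+3)), c s (h²+r²)^(-(m+3))]` and turns `u · exp(-c s u^(-2(m+3))) du` into a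
constant multiple of `t^(z-1) e^(-t) dt` with `z = -1/(m+3)`. Since `t^(z-1) e^(-t)` is integrable
on every ray `(x, ∞)` with `x > 0`, whatever the sign of `z`, the integral over the image interval
is a difference of two upper incomplete Gamma values.
-/

open Real MeasureTheory

/-- Upper incomplete Gamma function Γ_u(z, x) = ∫_x^∞ t^{z-1} e^{-t} dt. -/
noncomputable def upperGamma (z x : ℝ) : ℝ :=
  ∫ t in Set.Ioi x, t ^ (z - 1) * Real.exp (-t)

open Set

lemma integrableOn_rpow_mul_exp_neg_Ioi (z : ℝ) {x : ℝ} (hx : 0 < x) :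
    IntegrableOn (fun t : ℝ => t ^ (z - 1) * exp (-t)) (Ioi x) := by
  refine integrable_of_isBigO_exp_neg one_half_pos (fun t ht => ?_) ?_
  · exact ((continuousAt_id.rpow_const (Or.inl (hx.trans_le ht).ne')).mul
      (continuous_exp.comp continuous_neg).continuousAt).continuousWithinAt
  · simpa only [mul_comm] using (Gamma_integrand_isLittleO (z - 1)).isBigO

lemma upperGamma_sub_upperGamma (z : ℝ) {x y : ℝ} (hx : 0 < x) (hy : 0 < y) :
    upperGamma z x - upperGamma z y = ∫ t in x..y, t ^ (z - 1) * exp (-t) :=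
  intervalIntegral.integral_Ioi_sub_Ioi' (integrableOn_rpow_mul_exp_neg_Ioi z hx)
    (integrableOn_rpow_mul_exp_neg_Ioi z hy)

lemma mul_rpow_two_div_sub_one_mul_deriv {p C u : ℝ} (hp : p ≠ 0) (hC : 0 < C) (hu : 0 < u) :
    (C * u ^ p) ^ (2 / p - 1) * (C * (p * u ^ (p - 1))) = p * C ^ (2 / p) * u := by
  have hexp : p * (2 / p - 1) + (p - 1) = 1 := by field_simp; ring
  calc (C * u ^ p) ^ (2 / p - 1) * (C * (p * u ^ (p - 1)))
      = p * (C ^ (2 / p - 1) * C) * (u ^ (p * (2 / p - 1)) * u ^ (p - 1)) := by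
        rw [mul_rpow hC.le (rpow_nonneg hu.le _), ← rpow_mul hu.le]; ring
    _ = p * C ^ (2 / p) * u := by
        rw [rpow_sub_one hC.ne', div_mul_cancel₀ _ hC.ne', ← rpow_add hu, hexp, rpow_one]

theorem integral_mul_exp_neg_mul_rpow {p C a b : ℝ} (hp : p ≠ 0) (hC : 0 < C) (ha : 0 < a)
    (hb : 0 < b) :
    ∫ u in a..b, u * exp (-(C * u ^ p)) =
      C ^ (-(2 / p)) / p * (upperGamma (2 / p) (C * a ^ p) - upperGamma (2 / p) (C * b ^ p)) := by
  have hpos : ∀ u ∈ uIcc a b, 0 < u := fun u hu => (lt_min ha hb).trans_le hu.1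
  have hderiv : ∀ u ∈ uIcc a b, HasDerivAt (fun u => C * u ^ p) (C * (p * u ^ (p - 1))) u :=
    fun u hu => (hasDerivAt_rpow_const (Or.inl (hpos u hu).ne')).const_mul C
  have hderiv_cont : ContinuousOn (fun u => C * (p * u ^ (p - 1))) (uIcc a b) :=
    continuousOn_const.mul (continuousOn_const.mul
      (continuousOn_id.rpow_const fun u hu => Or.inl (hpos u hu).ne'))
  have hgamma_cont : ContinuousOn (fun t => t ^ (2 / p - 1) * exp (-t))
      ((fun u => C * u ^ p) '' uIcc a b) := by
    rintro _ ⟨u, hu, rfl⟩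
    have ht : C * u ^ p ≠ 0 := (mul_pos hC (rpow_pos_of_pos (hpos u hu) p)).ne'
    exact ((continuousAt_id.rpow_const (Or.inl ht)).mul
      (continuous_exp.comp continuous_neg).continuousAt).continuousWithinAt
  have hintegrand : EqOn (fun u => u * exp (-(C * u ^ p)))
      (fun u => C ^ (-(2 / p)) / p *
        (((fun t => t ^ (2 / p - 1) * exp (-t)) ∘ (fun u => C * u ^ p)) u *
          (C * (p * u ^ (p - 1)))))
      (uIcc a b) := by
    intro u hu
    calc u * exp (-(C * u ^ p))
        = C ^ (-(2 / p)) / p * (p * C ^ (2 / p) * u) * exp (-(C * u ^ p)) := by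
          rw [rpow_neg hC.le]; field_simp
      _ = _ := by
          rw [← mul_rpow_two_div_sub_one_mul_deriv hp hC (hpos u hu)]
          simp only [Function.comp_apply]
          ring
  rw [intervalIntegral.integral_congr hintegrand, intervalIntegral.integral_const_mul,
    intervalIntegral.integral_comp_mul_deriv' hderiv hderiv_cont hgamma_cont,
    upperGamma_sub_upperGamma _ (mul_pos hC (rpow_pos_of_pos ha p))
      (mul_pos hC (rpow_pos_of_pos hb p))]

theorem vlc_interferer_laplace_general (c m h r T s : ℝ)
    (hc : 0 < c) (hm : 0 ≤ m) (hh : 0 < h) (hs : 0 < s) :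
    (2 / (T ^ 2 - r ^ 2)) *
        ∫ u in Real.sqrt (r ^ 2 + h ^ 2)..Real.sqrt (T ^ 2 + h ^ 2),
          u * Real.exp (-(s * c * u ^ (-(2 * (m + 3)))))
      = (c * s) ^ ((1 : ℝ) / (m + 3)) / ((m + 3) * (T ^ 2 - r ^ 2)) *
          (upperGamma (-(1 / (m + 3))) (c * s * (h ^ 2 + T ^ 2) ^ (-(m + 3)))
            - upperGamma (-(1 / (m + 3))) (c * s * (h ^ 2 + r ^ 2) ^ (-(m + 3)))) := by
  have hk : m + 3 ≠ 0 := by positivity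
  have hsqrt_rpow : ∀ x : ℝ, 0 < x → √x ^ (-(2 * (m + 3))) = x ^ (-(m + 3)) := by
    intro x hx
    rw [sqrt_eq_rpow, ← rpow_mul hx.le]; ring_nf
  have hexp : 2 / -(2 * (m + 3)) = -(1 / (m + 3)) := by field_simp
  simp_rw [mul_comm s c]
  rw [integral_mul_exp_neg_mul_rpow (neg_ne_zero.2 (mul_ne_zero two_ne_zero hk)) (by positivity)
    (sqrt_pos.2 (by positivity)) (sqrt_pos.2 (by positivity)),
    hsqrt_rpow _ (by positivity), hsqrt_rpow _ (by positivity), add_comm (r ^ 2), add_comm (T ^ 2),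
    hexp, neg_neg]
  field_simp
  ring

/-- Conditional Laplace transform of a single VLC interferer: closed form in terms
of the (generalized) upper incomplete Gamma function. -/
theorem vlc_interferer_laplace (c m h r T s : ℝ)
    (hc : 0 < c) (hm : 0 ≤ m) (hh : 0 < h) (hr : 0 ≤ r) (hrT : r < T) (hs : 0 < s) :
    (2 / (T ^ 2 - r ^ 2)) *
        ∫ u in Real.sqrt (r ^ 2 + h ^ 2)..Real.sqrt (T ^ 2 + h ^ 2),
          u * Real.exp (-(s * c * u ^ (-(2 * (m + 3)))))
      = (c * s) ^ ((1 : ℝ) / (m + 3)) / ((m + 3) * (T ^ 2 - r ^ 2)) *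
          (upperGamma (-(1 / (m + 3))) (c * s * (h ^ 2 + T ^ 2) ^ (-(m + 3)))
            - upperGamma (-(1 / (m + 3))) (c * s * (h ^ 2 + r ^ 2) ^ (-(m + 3)))) :=
  vlc_interferer_laplace_general c m h r T s hc hm hh hs
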